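/- arXiv:2012.15726 — 4 statements merged into one kernel-verified Lean document; each statement's English description precedes it below -/
import Mathlib

section
/- Let M, N be d×d positive definite real symmetric matrices with M ⪯ N. Then log(M) ⪯ log(N), i.e., the matrix logarithm is operator monotone on positive definite matrices. -/
/-!
`matFun f A` is the continuous functional calculus `cfc f A` of the real symmetric matrix `A`.
Entrywise complexification is a continuous star-algebra embedding of the real matrices into the
C⋆-algebra of complex matrices; it commutes with `cfc` and reflects the Loewner order. The claim
thus reduces to the operator monotonicity of the logarithm in a C⋆-algebra (`CFC.log_le_log`).
-/

open Matrix

noncomputable def matFun {d : ℕ} (f : ℝ → ℝ) (M : Matrix (Fin d) (Fin d) ℝ)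
    (hM : M.IsHermitian) : Matrix (Fin d) (Fin d) ℝ :=
  (hM.eigenvectorUnitary : Matrix (Fin d) (Fin d) ℝ) * diagonal (f ∘ hM.eigenvalues) *
    star (hM.eigenvectorUnitary : Matrix (Fin d) (Fin d) ℝ)

open scoped MatrixOrder ComplexOrder Matrix.Norms.L2Operator

namespace Matrix

variable {n : Type*} [Fintype n] [DecidableEq n]

noncomputable def ofRealStarAlgHom : Matrix n n ℝ →⋆ₐ[ℝ] Matrix n n ℂ :=
  { Complex.ofRealAm.mapMatrix with
    map_star' := fun A => by ext; simp }

@[simp]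
lemma ofRealStarAlgHom_apply (A : Matrix n n ℝ) :
    ofRealStarAlgHom A = A.map Complex.ofReal :=
  rfl

lemma continuous_ofRealStarAlgHom :
    Continuous (ofRealStarAlgHom : Matrix n n ℝ → Matrix n n ℂ) :=
  continuous_id.matrix_map Complex.continuous_ofReal

lemma ofRealStarAlgHom_cfc (f : ℝ → ℝ) {A : Matrix n n ℝ} (hA : IsSelfAdjoint A) :
    ofRealStarAlgHom (cfc f A) = cfc f (ofRealStarAlgHom A) :=
  StarAlgHom.map_cfc _ f A (A.finite_spectrum.continuousOn _) continuous_ofRealStarAlgHom hA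
    (hA.map _)

lemma nonneg_of_ofRealStarAlgHom_nonneg {A : Matrix n n ℝ} (h : 0 ≤ ofRealStarAlgHom A) :
    0 ≤ A := by
  rw [nonneg_iff_posSemidef, posSemidef_iff_dotProduct_mulVec] at h ⊢
  refine ⟨?_, fun x => ?_⟩
  · ext i j
    simpa using congrFun (congrFun h.1 i) j
  · have hx : (star fun i => (x i : ℂ)) ⬝ᵥ A.map Complex.ofReal *ᵥ (fun i => (x i : ℂ)) =
        ((x ⬝ᵥ A *ᵥ x : ℝ) : ℂ) := by
      simp [dotProduct, mulVec, Finset.mul_sum]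
    simpa [hx, star_trivial] using h.2 (fun i => (x i : ℂ))

lemma IsStrictlyPositive.ofRealStarAlgHom {A : Matrix n n ℝ} (hA : IsStrictlyPositive A) :
    IsStrictlyPositive (ofRealStarAlgHom A) :=
  ⟨by simpa using OrderHomClass.mono Matrix.ofRealStarAlgHom hA.nonneg, hA.isUnit.map _⟩

lemma cfc_log_le_cfc_log {A B : Matrix n n ℝ} (hA : IsStrictlyPositive A) (hAB : A ≤ B) :
    cfc Real.log A ≤ cfc Real.log B := by
  have hA' : IsSelfAdjoint A := .of_nonneg hA.nonneg
  have hB' : IsSelfAdjoint B := .of_nonneg (hA.nonneg.trans hAB)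
  rw [← sub_nonneg]
  apply nonneg_of_ofRealStarAlgHom_nonneg
  rw [map_sub, ofRealStarAlgHom_cfc _ hA', ofRealStarAlgHom_cfc _ hB', sub_nonneg]
  exact CFC.log_le_log (OrderHomClass.mono ofRealStarAlgHom hAB) hA.ofRealStarAlgHom

end Matrix

lemma matFun_eq_cfc {d : ℕ} (f : ℝ → ℝ) {A : Matrix (Fin d) (Fin d) ℝ} (hA : A.IsHermitian) :
    matFun f A hA = cfc f A := by
  rw [hA.cfc_eq, IsHermitian.cfc, Unitary.conjStarAlgAut_apply]
  rfl

/-- **Operator monotonicity of the logarithm.** If `M ⪯ N` are positive definite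
real symmetric matrices, then `log M ⪯ log N`. -/
theorem log_monotone {d : ℕ} (M N : Matrix (Fin d) (Fin d) ℝ)
    (hM : M.PosDef) (hN : N.PosDef) (hMN : (N - M).PosSemidef) :
    (matFun Real.log N hN.1 - matFun Real.log M hM.1).PosSemidef := by
  rw [matFun_eq_cfc, matFun_eq_cfc, ← nonneg_iff_posSemidef, sub_nonneg]
  exact cfc_log_le_cfc_log hM.isStrictlyPositive hMN
end

section
/- Let L > 0 and t ∈ ℝ, and let X be a d×d random real symmetric matrix with 0 ⪯ X ⪯ L·I almost surely. Then E[exp(tX)] ⪯ I + ((e^{tL} − 1)/L) · E[X] ⪯ exp(((e^{tL} − 1)/L) · E[X]). -/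
/-!
On `[0, L]` the convex function `x ↦ exp (t x)` lies below its chord, the line
`1 + ((exp (t L) - 1) / L) x`. For `0 ⪯ X ⪯ L • 1` the spectrum of `X` lies in `[0, L]`, so the
continuous functional calculus turns this into `exp (t X) ⪯ 1 + ((exp (t L) - 1) / L) X`, and
taking entrywise expectations, which is monotone for `⪯`, gives the first inequality. The second
is `1 + x ≤ exp x` through the functional calculus, applied to `((exp (t L) - 1) / L) E[X]`, which
is symmetric because `E[X] ⪰ 0`.
-/

open Matrix MeasureTheory
open scoped MatrixOrder ComplexOrder

theorem Real.exp_mul_le_one_add_mul_of_mem_Icc {L : ℝ} (hL : 0 < L) (t : ℝ) {x : ℝ}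
    (hx : x ∈ Set.Icc 0 L) :
    Real.exp (t * x) ≤ 1 + (Real.exp (t * L) - 1) / L * x := by
  have hL' := hL.ne'
  calc Real.exp (t * x) = Real.exp ((1 - x / L) • 0 + (x / L) • (t * L)) := by
        rw [smul_zero, zero_add, smul_eq_mul]; field_simp
    _ ≤ (1 - x / L) • Real.exp 0 + (x / L) • Real.exp (t * L) :=
        convexOn_exp.2 (Set.mem_univ 0) (Set.mem_univ (t * L))
          (sub_nonneg.2 <| (div_le_one hL).2 hx.2) (div_nonneg hx.1 hL.le) (sub_add_cancel 1 _)
    _ = 1 + (Real.exp (t * L) - 1) / L * x := by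
        simp only [smul_eq_mul, Real.exp_zero]; field_simp; ring

namespace Matrix

section

variable {n 𝕜 : Type*} [Fintype n] [DecidableEq n] [RCLike 𝕜]

-- `NormedSpace.exp` only depends on the topology, so any matrix norm inducing it will do.
theorem IsHermitian.exp_eq_cfc {A : Matrix n n 𝕜} (hA : A.IsHermitian) :
    NormedSpace.exp A = cfc Real.exp A :=
  (@CFC.real_exp_eq_normedSpace_exp _ Matrix.linftyOpNormedRing _ Matrix.linftyOpNormedAlgebra
    IsHermitian.instContinuousFunctionalCalculus A hA.isSelfAdjoint).symm

theorem one_add_le_exp {A : Matrix n n 𝕜} (hA : A.IsHermitian) : 1 + A ≤ NormedSpace.exp A := by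
  rw [hA.exp_eq_cfc]
  calc 1 + A = cfc (fun x => 1 + x) A := by
        rw [cfc_add .., cfc_const_one .., cfc_id' ..]
    _ ≤ cfc Real.exp A := cfc_mono fun x _ => by linarith [Real.add_one_le_exp x]

theorem spectrum_subset_Icc {A : Matrix n n 𝕜} {L : ℝ} (h0 : 0 ≤ A) (hL : A ≤ L • 1) :
    spectrum ℝ A ⊆ Set.Icc 0 L := by
  intro x hx
  have hA : IsSelfAdjoint A := h0.posSemidef.isHermitian
  exact ⟨spectrum_nonneg_of_nonneg h0 hx,
    (le_algebraMap_iff_spectrum_le hA).1 (by rwa [Algebra.algebraMap_eq_smul_one]) x hx⟩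

theorem exp_smul_le_one_add_smul {A : Matrix n n 𝕜} {L : ℝ} (hL : 0 < L) (t : ℝ)
    (h0 : 0 ≤ A) (hAL : A ≤ L • 1) :
    NormedSpace.exp (t • A) ≤ 1 + ((Real.exp (t * L) - 1) / L) • A := by
  have hA : A.IsHermitian := h0.posSemidef.isHermitian
  rw [(hA.smul (IsSelfAdjoint.all t)).exp_eq_cfc, ← cfc_comp_smul t Real.exp A,
    ← cfc_const_mul_id ((Real.exp (t * L) - 1) / L) A, ← cfc_const_one ℝ A, ← cfc_add ..]
  exact cfc_mono fun x hx =>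
    Real.exp_mul_le_one_add_mul_of_mem_Icc hL t (spectrum_subset_Icc h0 hAL hx)

end

section

variable {n Ω : Type*} [MeasurableSpace Ω] {μ : Measure Ω} {M N : Ω → Matrix n n ℝ}

theorem dotProduct_mulVec_integral_entrywise [Fintype n]
    (hM : ∀ i j, Integrable (fun ω => M ω i j) μ) (x : n → ℝ) :
    x ⬝ᵥ (of fun i j => ∫ ω, M ω i j ∂μ) *ᵥ x = ∫ ω, x ⬝ᵥ M ω *ᵥ x ∂μ := by
  simp only [dotProduct, mulVec, of_apply, Finset.mul_sum]
  rw [integral_finsetSum _ fun i _ => integrable_finsetSum _ fun j _ =>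
    ((hM i j).mul_const _).const_mul _]
  refine Finset.sum_congr rfl fun i _ => ?_
  rw [integral_finsetSum _ fun j _ => ((hM i j).mul_const _).const_mul _]
  simp only [integral_const_mul, integral_mul_const]

theorem posSemidef_integral_entrywise_of_ae [Fintype n]
    (hM : ∀ i j, Integrable (fun ω => M ω i j) μ)
    (hpsd : ∀ᵐ ω ∂μ, (M ω).PosSemidef) : (of fun i j => ∫ ω, M ω i j ∂μ).PosSemidef := by
  rw [posSemidef_iff_dotProduct_mulVec]
  refine ⟨?_, fun x => ?_⟩
  · ext i j
    refine integral_congr_ae ?_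
    filter_upwards [hpsd] with ω hω
    exact hω.isHermitian.apply i j
  · rw [star_trivial, dotProduct_mulVec_integral_entrywise hM]
    exact integral_nonneg_of_ae <| hpsd.mono fun ω hω => hω.dotProduct_mulVec_nonneg x

theorem integral_entrywise_mono_ae [Fintype n] (hM : ∀ i j, Integrable (fun ω => M ω i j) μ)
    (hN : ∀ i j, Integrable (fun ω => N ω i j) μ) (hMN : ∀ᵐ ω ∂μ, M ω ≤ N ω) :
    (of fun i j => ∫ ω, M ω i j ∂μ) ≤ of fun i j => ∫ ω, N ω i j ∂μ := by
  have hsub : ((of fun i j => ∫ ω, N ω i j ∂μ) - of fun i j => ∫ ω, M ω i j ∂μ) =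
      of fun i j => ∫ ω, (N ω - M ω) i j ∂μ := by
    ext i j
    exact (integral_sub (hN i j) (hM i j)).symm
  rw [le_iff, hsub]
  exact posSemidef_integral_entrywise_of_ae (fun i j => (hN i j).sub (hM i j)) hMN

theorem integrable_one_add_smul_apply [DecidableEq n] [IsFiniteMeasure μ]
    (hM : ∀ i j, Integrable (fun ω => M ω i j) μ) (c : ℝ) (i j : n) :
    Integrable (fun ω => (1 + c • M ω) i j) μ :=
  (integrable_const _).add ((hM i j).const_mul c)

theorem integral_entrywise_one_add_smul [DecidableEq n] [IsProbabilityMeasure μ]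
    (hM : ∀ i j, Integrable (fun ω => M ω i j) μ) (c : ℝ) :
    (of fun i j => ∫ ω, (1 + c • M ω) i j ∂μ) = 1 + c • of fun i j => ∫ ω, M ω i j ∂μ := by
  ext i j : 1
  simp only [of_apply, add_apply, smul_apply, smul_eq_mul]
  rw [integral_add (integrable_const _) ((hM i j).const_mul c), integral_const, integral_const_mul]
  simp

end

end Matrix

theorem mgf_bound_general {d : ℕ} {Ω : Type*} [MeasurableSpace Ω] (μ : Measure Ω)
    [IsProbabilityMeasure μ] (L t : ℝ) (hL : 0 < L)
    (X : Ω → Matrix (Fin d) (Fin d) ℝ)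
    (hbound : ∀ᵐ ω ∂μ, (X ω).PosSemidef ∧ (L • (1 : Matrix (Fin d) (Fin d) ℝ) - X ω).PosSemidef)
    (hInt : ∀ i j, Integrable (fun ω => X ω i j) μ)
    (hIntExp : ∀ i j, Integrable (fun ω => NormedSpace.exp (t • X ω) i j) μ) :
    (1 + ((Real.exp (t * L) - 1) / L) • (Matrix.of fun i j => ∫ ω, X ω i j ∂μ)
        - (Matrix.of fun i j => ∫ ω, NormedSpace.exp (t • X ω) i j ∂μ)).PosSemidef ∧
      (NormedSpace.exp (((Real.exp (t * L) - 1) / L) •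
            (Matrix.of fun i j => ∫ ω, X ω i j ∂μ))
        - (1 + ((Real.exp (t * L) - 1) / L) •
            (Matrix.of fun i j => ∫ ω, X ω i j ∂μ))).PosSemidef := by
  have hmean : (Matrix.of fun i j => ∫ ω, X ω i j ∂μ).PosSemidef :=
    posSemidef_integral_entrywise_of_ae hInt (hbound.mono fun _ hω => hω.1)
  refine ⟨?_, one_add_le_exp (hmean.isHermitian.smul (IsSelfAdjoint.all _))⟩
  rw [← integral_entrywise_one_add_smul hInt]
  exact integral_entrywise_mono_ae hIntExp (integrable_one_add_smul_apply hInt _)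
    (hbound.mono fun _ hω => exp_smul_le_one_add_smul hL t hω.1.nonneg hω.2)

/-- **MGF bound (Hoeffding-type).** Let `X` be a random `d × d` real symmetric matrix
with `0 ⪯ X ⪯ L·I` almost surely, `L > 0`, and `t ∈ ℝ`. Then
`E[exp(tX)] ⪯ I + ((e^{tL} − 1)/L) · E[X] ⪯ exp(((e^{tL} − 1)/L) · E[X])`,
where expectations are taken entrywise. -/
theorem mgf_bound {d : ℕ} {Ω : Type*} [MeasurableSpace Ω] (μ : Measure Ω)
    [IsProbabilityMeasure μ] (L t : ℝ) (hL : 0 < L)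
    (X : Ω → Matrix (Fin d) (Fin d) ℝ)
    (hsymm : ∀ ω, (X ω).IsHermitian)
    (hbound : ∀ᵐ ω ∂μ, (X ω).PosSemidef ∧ (L • (1 : Matrix (Fin d) (Fin d) ℝ) - X ω).PosSemidef)
    (hInt : ∀ i j, Integrable (fun ω => X ω i j) μ)
    (hIntExp : ∀ i j, Integrable (fun ω => NormedSpace.exp (t • X ω) i j) μ) :
    (1 + ((Real.exp (t * L) - 1) / L) • (Matrix.of fun i j => ∫ ω, X ω i j ∂μ)
        - (Matrix.of fun i j => ∫ ω, NormedSpace.exp (t • X ω) i j ∂μ)).PosSemidef ∧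
      (NormedSpace.exp (((Real.exp (t * L) - 1) / L) •
            (Matrix.of fun i j => ∫ ω, X ω i j ∂μ))
        - (1 + ((Real.exp (t * L) - 1) / L) •
            (Matrix.of fun i j => ∫ ω, X ω i j ∂μ))).PosSemidef :=
  mgf_bound_general μ L t hL X hbound hInt hIntExp
end

section
/- Let L > 0, 0 < t < 3/L, and let X be a d×d random real symmetric matrix with E[X] = 0 and X ⪯ L·I almost surely. Then E[exp(tX)] ⪯ exp((t²/2)/(1 − tL/3) · E[X²]). -/
/-!
For `y ≤ c` with `0 ≤ c < 3` one has `exp y ≤ 1 + y + y² / (2 (1 - c/3))`: for `y ≤ 0` this is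
the second-order Taylor bound, and for `y ≥ 0` the tail of the exponential series is dominated by
a geometric series of ratio `y/3`, since `2 · 3^k ≤ (k+2)!`. Since the spectrum of `X` lies below
`L`, the continuous functional calculus turns this into the Loewner bound
`exp (tX) ≤ 1 + tX + c X²` with `c = (t²/2)/(1 - tL/3)`. Entrywise expectation preserves the
Loewner order and kills the linear term, and `1 + A ≤ exp A` for `A = c E[X²]` concludes.
-/

open Matrix MeasureTheory
open scoped Nat MatrixOrder

namespace Real

lemma exp_le_one_add_add_sq_div_two_of_nonpos {y : ℝ} (hy : y ≤ 0) :
    exp y ≤ 1 + y + y ^ 2 / 2 := by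
  have hg : ∀ x, HasDerivAt (fun x => 1 + x + x ^ 2 / 2 - exp x) (1 + x - exp x) x := fun x =>
    ((((hasDerivAt_id' x).const_add 1).fun_add
      ((hasDerivAt_pow 2 x).div_const 2)).fun_sub (hasDerivAt_exp x)).congr_deriv (by norm_num)
  have g_anti := antitone_of_deriv_nonpos (fun x => (hg x).differentiableAt)
    fun x => by rw [(hg x).deriv]; linarith [add_one_le_exp x]
  have := g_anti hy
  norm_num at this
  linarith

lemma exp_le_one_add_add_sq_div_two_div_of_nonneg {y : ℝ} (hy0 : 0 ≤ y) (hy3 : y < 3) :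
    exp y ≤ 1 + y + y ^ 2 / 2 / (1 - y / 3) := by
  have hq0 : 0 ≤ y / 3 := by positivity
  have hq1 : y / 3 < 1 := by linarith
  have hsum : Summable fun n : ℕ => y ^ n / n ! := summable_pow_div_factorial y
  have hexp : exp y = 1 + y + ∑' k : ℕ, y ^ (k + 2) / (k + 2)! := by
    rw [exp_eq_exp_ℝ, NormedSpace.exp_eq_tsum_div]
    beta_reduce
    rw [← hsum.sum_add_tsum_nat_add 2]
    simp [Finset.sum_range_succ]
  have hterm : ∀ k : ℕ, y ^ (k + 2) / (k + 2)! ≤ y ^ 2 / 2 * (y / 3) ^ k := fun k => by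
    have hfac := Nat.factorial_mul_pow_le_factorial (m := 2) (n := k)
    rw [Nat.factorial_two, add_comm 2 k] at hfac
    calc y ^ (k + 2) / (k + 2)! ≤ y ^ (k + 2) / (2 * 3 ^ k) := by gcongr; exact_mod_cast hfac
      _ = y ^ 2 / 2 * (y / 3) ^ k := by rw [div_pow, pow_add]; ring
  have htail : ∑' k : ℕ, y ^ (k + 2) / (k + 2)! ≤ y ^ 2 / 2 / (1 - y / 3) :=
    calc ∑' k : ℕ, y ^ (k + 2) / (k + 2)! ≤ ∑' k : ℕ, y ^ 2 / 2 * (y / 3) ^ k :=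
          ((summable_nat_add_iff 2).mpr hsum).tsum_le_tsum hterm
            ((summable_geometric_of_lt_one hq0 hq1).mul_left _)
      _ = y ^ 2 / 2 / (1 - y / 3) := by
          rw [tsum_mul_left, tsum_geometric_of_lt_one hq0 hq1]; ring
  linarith

lemma exp_le_one_add_add_sq_div_two_div_of_le {c y : ℝ} (hc0 : 0 ≤ c) (hc3 : c < 3)
    (hy : y ≤ c) : exp y ≤ 1 + y + y ^ 2 / 2 / (1 - c / 3) := by
  rcases le_total y 0 with hy0 | hy0
  · calc exp y ≤ 1 + y + y ^ 2 / 2 := exp_le_one_add_add_sq_div_two_of_nonpos hy0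
      _ ≤ 1 + y + y ^ 2 / 2 / (1 - c / 3) := by
          grw [← le_div_self (by positivity : 0 ≤ y ^ 2 / 2) (by linarith) (by linarith)]
  · calc exp y ≤ 1 + y + y ^ 2 / 2 / (1 - y / 3) :=
          exp_le_one_add_add_sq_div_two_div_of_nonneg hy0 (hy.trans_lt hc3)
      _ ≤ 1 + y + y ^ 2 / 2 / (1 - c / 3) := by gcongr; linarith

end Real

namespace IsSelfAdjoint

variable {A : Type*} [NormedRing A] [StarRing A] [NormedAlgebra ℝ A] [PartialOrder A]
  [StarOrderedRing A] [ContinuousFunctionalCalculus ℝ A IsSelfAdjoint] {a : A}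

lemma one_add_le_exp (ha : IsSelfAdjoint a) : 1 + a ≤ NormedSpace.exp a := by
  rw [← CFC.real_exp_eq_normedSpace_exp]
  conv_lhs => rw [← cfc_id' ℝ a, ← cfc_one ℝ a, ← cfc_add ..]
  exact cfc_mono fun x _ => by simpa [add_comm] using Real.add_one_le_exp x

lemma exp_smul_le_one_add_smul_add_smul_mul_self [StarModule ℝ A] [NonnegSpectrumClass ℝ A]
    (ha : IsSelfAdjoint a) {L t : ℝ} (hL : 0 ≤ L) (ht : 0 ≤ t) (htL : t * L < 3)
    (haL : a ≤ algebraMap ℝ A L) :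
    NormedSpace.exp (t • a) ≤ 1 + t • a + (t ^ 2 / 2 / (1 - t * L / 3)) • (a * a) := by
  set c := t ^ 2 / 2 / (1 - t * L / 3)
  have hspec : ∀ x ∈ spectrum ℝ a, x ≤ L := (le_algebraMap_iff_spectrum_le ha).mp haL
  have hquad : 1 + t • a + c • (a * a) = cfc (fun x => 1 + t * x + c * x ^ 2) a := by
    rw [cfc_add .., cfc_add .., cfc_const_one .., cfc_const_mul .., cfc_const_mul .., cfc_id' ..,
      cfc_pow .., cfc_id' .., sq]
  rw [hquad, ← CFC.real_exp_eq_normedSpace_exp, ← cfc_comp_smul ..]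
  refine cfc_mono fun x hx => ?_
  have htx : t * x ≤ t * L := mul_le_mul_of_nonneg_left (hspec x hx) ht
  calc Real.exp (t • x) ≤ 1 + t * x + (t * x) ^ 2 / 2 / (1 - t * L / 3) :=
        Real.exp_le_one_add_add_sq_div_two_div_of_le (by positivity) htL htx
    _ = 1 + t * x + c * x ^ 2 := by ring

end IsSelfAdjoint

section EntrywiseIntegral

variable {Ω m n : Type*} [MeasurableSpace Ω] {μ : Measure Ω}

noncomputable def entrywiseIntegral (f : Ω → Matrix m n ℝ) (μ : Measure Ω) : Matrix m n ℝ :=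
  of fun i j => ∫ ω, f ω i j ∂μ

section Rectangular

variable {f g : Ω → Matrix m n ℝ}

lemma entrywiseIntegral_add (hf : ∀ i j, Integrable (fun ω => f ω i j) μ)
    (hg : ∀ i j, Integrable (fun ω => g ω i j) μ) :
    entrywiseIntegral (fun ω => f ω + g ω) μ = entrywiseIntegral f μ + entrywiseIntegral g μ := by
  ext i j; exact integral_add (hf i j) (hg i j)

lemma entrywiseIntegral_sub (hf : ∀ i j, Integrable (fun ω => f ω i j) μ)
    (hg : ∀ i j, Integrable (fun ω => g ω i j) μ) :
    entrywiseIntegral (fun ω => f ω - g ω) μ = entrywiseIntegral f μ - entrywiseIntegral g μ := by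
  ext i j; exact integral_sub (hf i j) (hg i j)

lemma entrywiseIntegral_smul (c : ℝ) :
    entrywiseIntegral (fun ω => c • f ω) μ = c • entrywiseIntegral f μ := by
  ext i j; exact integral_const_mul c _

lemma entrywiseIntegral_const [IsProbabilityMeasure μ] (M : Matrix m n ℝ) :
    entrywiseIntegral (fun _ => M) μ = M := by
  ext i j; simp [entrywiseIntegral]

lemma dotProduct_mulVec_entrywiseIntegral [Fintype m] [Fintype n]
    (hf : ∀ i j, Integrable (fun ω => f ω i j) μ) (x : m → ℝ) (y : n → ℝ) :
    x ⬝ᵥ (entrywiseIntegral f μ *ᵥ y) = ∫ ω, x ⬝ᵥ (f ω *ᵥ y) ∂μ := by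
  simp only [dotProduct, mulVec, entrywiseIntegral, of_apply, Finset.mul_sum]
  rw [integral_finsetSum _ fun i _ => integrable_finsetSum _ fun j _ =>
    ((hf i j).mul_const _).const_mul _]
  refine Finset.sum_congr rfl fun i _ => ?_
  rw [integral_finsetSum _ fun j _ => ((hf i j).mul_const _).const_mul _]
  simp only [integral_const_mul, integral_mul_const]

end Rectangular

variable [Fintype n] {f g : Ω → Matrix n n ℝ}

lemma posSemidef_entrywiseIntegral (hf : ∀ i j, Integrable (fun ω => f ω i j) μ)
    (hpsd : ∀ᵐ ω ∂μ, (f ω).PosSemidef) : (entrywiseIntegral f μ).PosSemidef := by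
  refine .of_dotProduct_mulVec_nonneg ?_ fun x => ?_
  · ext i j
    exact integral_congr_ae <| hpsd.mono fun ω h => h.isHermitian.apply i j
  · rw [dotProduct_mulVec_entrywiseIntegral hf]
    exact integral_nonneg_of_ae <| hpsd.mono fun ω h => h.dotProduct_mulVec_nonneg x

lemma entrywiseIntegral_mono (hf : ∀ i j, Integrable (fun ω => f ω i j) μ)
    (hg : ∀ i j, Integrable (fun ω => g ω i j) μ) (hfg : ∀ᵐ ω ∂μ, f ω ≤ g ω) :
    entrywiseIntegral f μ ≤ entrywiseIntegral g μ := by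
  rw [le_iff, ← entrywiseIntegral_sub hg hf]
  exact posSemidef_entrywiseIntegral (fun i j => (hg i j).sub (hf i j)) hfg

end EntrywiseIntegral

/-- **MGF bound (Bennett/Bernstein-type).** Let `X` be a random `d × d` real symmetric
matrix with `E[X] = 0` and `X ⪯ L·I` almost surely, and let `0 < t < 3/L`. Then
`E[exp(tX)] ⪯ exp((t²/2)/(1 − tL/3) · E[X²])`, expectations taken entrywise. -/
theorem mgf_bound_bennett {d : ℕ} {Ω : Type*} [MeasurableSpace Ω] (μ : Measure Ω)
    [IsProbabilityMeasure μ] (L t : ℝ) (hL : 0 < L) (ht : 0 < t) (htL : t < 3 / L)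
    (X : Ω → Matrix (Fin d) (Fin d) ℝ)
    (hsymm : ∀ ω, (X ω).IsHermitian)
    (hmean : (Matrix.of fun i j => ∫ ω, X ω i j ∂μ) = 0)
    (hbound : ∀ᵐ ω ∂μ, (L • (1 : Matrix (Fin d) (Fin d) ℝ) - X ω).PosSemidef)
    (hInt : ∀ i j, Integrable (fun ω => X ω i j) μ)
    (hIntSq : ∀ i j, Integrable (fun ω => (X ω * X ω) i j) μ)
    (hIntExp : ∀ i j, Integrable (fun ω => NormedSpace.exp (t • X ω) i j) μ) :
    (NormedSpace.exp ((t ^ 2 / 2 / (1 - t * L / 3)) •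
          (Matrix.of fun i j => ∫ ω, (X ω * X ω) i j ∂μ))
      - (Matrix.of fun i j => ∫ ω, NormedSpace.exp (t • X ω) i j ∂μ)).PosSemidef := by
  set c := t ^ 2 / 2 / (1 - t * L / 3)
  have hEX : entrywiseIntegral X μ = 0 := hmean
  -- The functional calculus lemmas need some normed algebra structure on matrices; the
  -- exponential and the Loewner order do not depend on which one.
  have hbennett : ∀ᵐ ω ∂μ, NormedSpace.exp (t • X ω) ≤ 1 + t • X ω + c • (X ω * X ω) :=
    open scoped Matrix.Norms.L2Operator in hbound.mono fun ω h =>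
      (hsymm ω).isSelfAdjoint.exp_smul_le_one_add_smul_add_smul_mul_self hL.le ht.le
        (by rwa [lt_div_iff₀ hL] at htL) (by rwa [Algebra.algebraMap_eq_smul_one, le_iff])
  have hEX2 : (entrywiseIntegral (fun ω => X ω * X ω) μ).PosSemidef :=
    posSemidef_entrywiseIntegral hIntSq <| ae_of_all _ fun ω => by
      simpa only [(hsymm ω).eq] using posSemidef_conjTranspose_mul_self (X ω)
  have hone (i j) : Integrable (fun _ : Ω => (1 : Matrix (Fin d) (Fin d) ℝ) i j) μ :=
    integrable_const _
  have htX (i j) : Integrable (fun ω => (t • X ω) i j) μ := (hInt i j).const_mul t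
  have hcX2 (i j) : Integrable (fun ω => (c • (X ω * X ω)) i j) μ := (hIntSq i j).const_mul c
  rw [← le_iff]
  calc entrywiseIntegral (fun ω => NormedSpace.exp (t • X ω)) μ
      ≤ entrywiseIntegral (fun ω => 1 + t • X ω + c • (X ω * X ω)) μ :=
        entrywiseIntegral_mono hIntExp (fun i j => ((hone i j).add (htX i j)).add (hcX2 i j))
          hbennett
    _ = 1 + c • entrywiseIntegral (fun ω => X ω * X ω) μ := by
        rw [entrywiseIntegral_add (f := fun ω => 1 + t • X ω) (fun i j => (hone i j).add (htX i j))
            hcX2, entrywiseIntegral_add (f := fun _ => 1) hone htX, entrywiseIntegral_const,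
          entrywiseIntegral_smul, entrywiseIntegral_smul, hEX, smul_zero, add_zero]
    _ ≤ NormedSpace.exp (c • entrywiseIntegral (fun ω => X ω * X ω) μ) :=
        open scoped Matrix.Norms.L2Operator in
          ((IsSelfAdjoint.all c).smul hEX2.isHermitian.isSelfAdjoint).one_add_le_exp
end

section
/- Let Z be a d×d positive semidefinite real symmetric matrix with ‖Z‖ > λ_min(Z) ≥ 0, and let φ : ℝ → ℝ be convex. Then the refined intrinsic-dimension bound is at least as tight as the intrinsic-dimension bound: updim(Z)·φ(‖Z‖) + lowdim(Z)·φ(λ_min(Z)) ≤ intdim(Z)·φ(‖Z‖) + (d − intdim(Z))·φ(0). -/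
open Matrix

/-- Largest eigenvalue of a real symmetric matrix (spectral norm for `Z ⪰ 0`). -/
noncomputable def lamMax {d : ℕ} {M : Matrix (Fin d) (Fin d) ℝ}
    (hM : M.IsHermitian) : ℝ := ⨆ i, hM.eigenvalues i

/-- Smallest eigenvalue of a real symmetric matrix. -/
noncomputable def lamMin {d : ℕ} {M : Matrix (Fin d) (Fin d) ℝ}
    (hM : M.IsHermitian) : ℝ := ⨅ i, hM.eigenvalues i

/-- Upper intrinsic dimension `updim(Z) = trace(Z − λ_min·I)/(‖Z‖ − λ_min)`. -/
noncomputable def updim {d : ℕ} {M : Matrix (Fin d) (Fin d) ℝ}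
    (hM : M.IsHermitian) : ℝ :=
  (M - lamMin hM • (1 : Matrix (Fin d) (Fin d) ℝ)).trace / (lamMax hM - lamMin hM)

/-- Lower intrinsic dimension `lowdim(Z) = d − updim(Z)`. -/
noncomputable def lowdim {d : ℕ} {M : Matrix (Fin d) (Fin d) ℝ}
    (hM : M.IsHermitian) : ℝ := (d : ℝ) - updim hM

/-!
Since `0 ≤ λ_min ≤ ‖Z‖`, convexity bounds `φ(λ_min)` by the chord
`(λ_min/‖Z‖)·φ(‖Z‖) + (1 − λ_min/‖Z‖)·φ(0)`. As `lowdim(Z) ≥ 0` (because `trace Z ≤ d·‖Z‖`),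
substituting the chord into the refined bound can only increase it, and the identity
`updim·(‖Z‖ − λ_min) = trace Z − d·λ_min` turns the result into exactly the
intrinsic-dimension bound.
-/

theorem ConvexOn.le_chord_from_zero {s : Set ℝ} {φ : ℝ → ℝ} (hφ : ConvexOn ℝ s φ)
    {x L : ℝ} (h0 : 0 ∈ s) (hL : L ∈ s) (hx : 0 ≤ x) (hxL : x ≤ L) :
    φ x ≤ x / L * φ L + (1 - x / L) * φ 0 := by
  rcases (hx.trans hxL).eq_or_lt with rfl | hLpos
  · obtain rfl : x = 0 := le_antisymm hxL hx
    simp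
  have hcombo := hφ.2 hL h0 (div_nonneg hx hLpos.le)
    (sub_nonneg.2 (div_le_one_of_le₀ hxL hLpos.le)) (add_sub_cancel _ _)
  simpa [div_mul_cancel₀ x hLpos.ne'] using hcombo

theorem refined_bound_le_intdim_bound {φ : ℝ → ℝ} (hφ : ConvexOn ℝ Set.univ φ)
    {d u T m L : ℝ} (hm : 0 ≤ m) (hmL : m < L) (hu : u ≤ d)
    (huT : u * (L - m) = T - d * m) :
    u * φ L + (d - u) * φ m ≤ T / L * φ L + (d - T / L) * φ 0 := by
  have hL : L ≠ 0 := (hm.trans_lt hmL).ne'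
  calc u * φ L + (d - u) * φ m
      ≤ u * φ L + (d - u) * (m / L * φ L + (1 - m / L) * φ 0) := by
        gcongr
        exact hφ.le_chord_from_zero trivial trivial hm hmL.le
    _ = T / L * φ L + (d - T / L) * φ 0 := by
        field_simp
        linear_combination (φ L - φ 0) * huT

namespace Matrix.IsHermitian

variable {d : ℕ} {M : Matrix (Fin d) (Fin d) ℝ} (hM : M.IsHermitian)

theorem eigenvalues_le_lamMax (i : Fin d) : hM.eigenvalues i ≤ lamMax hM :=
  le_ciSup (Set.finite_range _).bddAbove i

theorem lamMin_le_eigenvalues (i : Fin d) : lamMin hM ≤ hM.eigenvalues i :=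
  ciInf_le (Set.finite_range _).bddBelow i

theorem lamMin_le_lamMax : lamMin hM ≤ lamMax hM := by
  rcases isEmpty_or_nonempty (Fin d) with _ | ⟨⟨i⟩⟩
  · simp [lamMin, lamMax]
  · exact (hM.lamMin_le_eigenvalues i).trans (hM.eigenvalues_le_lamMax i)

theorem trace_le_card_mul_lamMax : M.trace ≤ d * lamMax hM := by
  rw [hM.trace_eq_sum_eigenvalues]
  simpa using Finset.sum_le_sum fun i (_ : i ∈ Finset.univ) => hM.eigenvalues_le_lamMax i

theorem trace_sub_lamMin_smul_one :
    (M - lamMin hM • (1 : Matrix (Fin d) (Fin d) ℝ)).trace = M.trace - d * lamMin hM := by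
  simp [trace_sub, trace_smul, mul_comm]

theorem updim_mul_sub (hgap : lamMin hM < lamMax hM) :
    updim hM * (lamMax hM - lamMin hM) = M.trace - d * lamMin hM := by
  rw [updim, hM.trace_sub_lamMin_smul_one, div_mul_cancel₀ _ (sub_pos.2 hgap).ne']

theorem updim_le_card : updim hM ≤ d := by
  refine div_le_of_le_mul₀ (sub_nonneg.2 hM.lamMin_le_lamMax) (Nat.cast_nonneg d) ?_
  rw [hM.trace_sub_lamMin_smul_one]
  linarith [hM.trace_le_card_mul_lamMax]

end Matrix.IsHermitian

/-- **The refined intrinsic-dimension bound is tighter.** For positive semidefinite `Z`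
with `‖Z‖ > λ_min(Z) ≥ 0` and convex `φ`,
`updim(Z)·φ(‖Z‖) + lowdim(Z)·φ(λ_min(Z)) ≤ intdim(Z)·φ(‖Z‖) + (d − intdim(Z))·φ(0)`,
where `intdim(Z) = trace(Z)/‖Z‖`. -/
theorem refined_bound_tighter {d : ℕ} (Z : Matrix (Fin d) (Fin d) ℝ) (hZ : Z.PosSemidef)
    (hgap : lamMin hZ.1 < lamMax hZ.1) (hmin : 0 ≤ lamMin hZ.1)
    (φ : ℝ → ℝ) (hφ : ConvexOn ℝ Set.univ φ) :
    updim hZ.1 * φ (lamMax hZ.1) + lowdim hZ.1 * φ (lamMin hZ.1)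
      ≤ (Z.trace / lamMax hZ.1) * φ (lamMax hZ.1)
        + ((d : ℝ) - Z.trace / lamMax hZ.1) * φ 0 :=
  refined_bound_le_intdim_bound hφ hmin hgap hZ.1.updim_le_card (hZ.1.updim_mul_sub hgap)
end
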